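/- arXiv:2510.13967 — 4 statements merged into one kernel-verified Lean document; each statement's English description precedes it below -/
import Mathlib

section
/- Every singular point of the cubic surface W defined by X1^2 X3 = X0^3 + (a X2 + b X3) X0 X3 + (c X2^2 + d X2 X3 + e X3^2) lies on the line X0 = X3 = 0, and the singular points on that line are exactly the points [0 : ±√c : 1 : 0], assuming the affine surface x1^2 = x0^3 + (a x2 + b) x0 + (c x2^2 + d x2 + e) (the chart X3 = 1) is smooth. -/
open MvPolynomial

section Aux

variable {K : Type*} [Field K] (a b c d e : K)

private lemma aux_E (v : Fin 4 → K) :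
    eval v ((X 0 ^ 3 + (C a * X 2 + C b * X 3) * X 0 * X 3
      + (C c * X 2 ^ 2 + C d * X 2 * X 3 + C e * X 3 ^ 2) * X 3 - X 1 ^ 2 * X 3 :
      MvPolynomial (Fin 4) K)) =
      v 0 ^ 3 + (a * v 2 + b * v 3) * v 0 * v 3
        + (c * v 2 ^ 2 + d * v 2 * v 3 + e * v 3 ^ 2) * v 3 - v 1 ^ 2 * v 3 := by
  simp only [map_add, map_sub, map_mul, map_pow, eval_X, eval_C]

private lemma aux_d0 (v : Fin 4 → K) :
    eval v (pderiv 0 ((X 0 ^ 3 + (C a * X 2 + C b * X 3) * X 0 * X 3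
      + (C c * X 2 ^ 2 + C d * X 2 * X 3 + C e * X 3 ^ 2) * X 3 - X 1 ^ 2 * X 3 :
      MvPolynomial (Fin 4) K))) = 3 * v 0 ^ 2 + (a * v 2 + b * v 3) * v 3 := by
  simp only [map_add, map_sub, map_mul, map_pow, pderiv_mul, pderiv_pow, pderiv_X,
    pderiv_C, Pi.single_apply, smul_eq_mul, eval_X, eval_C, map_ofNat, map_one, map_zero]
  norm_num [Fin.ext_iff, show ((3:Fin 4):ℕ) = 3 from rfl]

private lemma aux_d1 (v : Fin 4 → K) :
    eval v (pderiv 1 ((X 0 ^ 3 + (C a * X 2 + C b * X 3) * X 0 * X 3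
      + (C c * X 2 ^ 2 + C d * X 2 * X 3 + C e * X 3 ^ 2) * X 3 - X 1 ^ 2 * X 3 :
      MvPolynomial (Fin 4) K))) = -(2 * v 1 * v 3) := by
  simp only [map_add, map_sub, map_mul, map_pow, pderiv_mul, pderiv_pow, pderiv_X,
    pderiv_C, Pi.single_apply, smul_eq_mul, eval_X, eval_C, map_ofNat, map_one, map_zero]
  norm_num [Fin.ext_iff, show ((3:Fin 4):ℕ) = 3 from rfl]

private lemma aux_d2 (v : Fin 4 → K) :
    eval v (pderiv 2 ((X 0 ^ 3 + (C a * X 2 + C b * X 3) * X 0 * X 3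
      + (C c * X 2 ^ 2 + C d * X 2 * X 3 + C e * X 3 ^ 2) * X 3 - X 1 ^ 2 * X 3 :
      MvPolynomial (Fin 4) K))) = a * v 0 * v 3 + (c * (2 * v 2) + d * v 3) * v 3 := by
  simp only [map_add, map_sub, map_mul, map_pow, pderiv_mul, pderiv_pow, pderiv_X,
    pderiv_C, Pi.single_apply, smul_eq_mul, eval_X, eval_C, map_ofNat, map_one, map_zero]
  norm_num [Fin.ext_iff, show ((3:Fin 4):ℕ) = 3 from rfl]

private lemma aux_d3 (v : Fin 4 → K) :
    eval v (pderiv 3 ((X 0 ^ 3 + (C a * X 2 + C b * X 3) * X 0 * X 3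
      + (C c * X 2 ^ 2 + C d * X 2 * X 3 + C e * X 3 ^ 2) * X 3 - X 1 ^ 2 * X 3 :
      MvPolynomial (Fin 4) K))) =
      b * v 0 * v 3 + (a * v 2 + b * v 3) * v 0 +
        ((d * v 2 + e * (2 * v 3)) * v 3 + (c * v 2 ^ 2 + d * v 2 * v 3 + e * v 3 ^ 2)) -
        v 1 ^ 2 := by
  simp only [map_add, map_sub, map_mul, map_pow, pderiv_mul, pderiv_pow, pderiv_X,
    pderiv_C, Pi.single_apply, smul_eq_mul, eval_X, eval_C, map_ofNat, map_one, map_zero]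
  norm_num [Fin.ext_iff, show ((3:Fin 4):ℕ) = 3 from rfl]

private lemma aux_GE (w : Fin 3 → K) :
    eval w ((X 0 ^ 3 + (C a * X 2 + C b) * X 0 + (C c * X 2 ^ 2 + C d * X 2 + C e) - X 1 ^ 2 :
      MvPolynomial (Fin 3) K)) =
      w 0 ^ 3 + (a * w 2 + b) * w 0 + (c * w 2 ^ 2 + d * w 2 + e) - w 1 ^ 2 := by
  simp only [map_add, map_sub, map_mul, map_pow, eval_X, eval_C]

private lemma aux_G0 (w : Fin 3 → K) :
    eval w (pderiv 0 ((X 0 ^ 3 + (C a * X 2 + C b) * X 0 + (C c * X 2 ^ 2 + C d * X 2 + C e)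
      - X 1 ^ 2 : MvPolynomial (Fin 3) K))) = 3 * w 0 ^ 2 + (a * w 2 + b) := by
  simp only [map_add, map_sub, map_mul, map_pow, pderiv_mul, pderiv_pow, pderiv_X,
    pderiv_C, Pi.single_apply, smul_eq_mul, eval_X, eval_C, map_ofNat, map_one, map_zero]
  norm_num [Fin.ext_iff, show ((2:Fin 3):ℕ) = 2 from rfl]

private lemma aux_G1 (w : Fin 3 → K) :
    eval w (pderiv 1 ((X 0 ^ 3 + (C a * X 2 + C b) * X 0 + (C c * X 2 ^ 2 + C d * X 2 + C e)
      - X 1 ^ 2 : MvPolynomial (Fin 3) K))) = -(2 * w 1) := by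
  simp only [map_add, map_sub, map_mul, map_pow, pderiv_mul, pderiv_pow, pderiv_X,
    pderiv_C, Pi.single_apply, smul_eq_mul, eval_X, eval_C, map_ofNat, map_one, map_zero]
  norm_num [Fin.ext_iff, show ((2:Fin 3):ℕ) = 2 from rfl]

private lemma aux_G2 (w : Fin 3 → K) :
    eval w (pderiv 2 ((X 0 ^ 3 + (C a * X 2 + C b) * X 0 + (C c * X 2 ^ 2 + C d * X 2 + C e)
      - X 1 ^ 2 : MvPolynomial (Fin 3) K))) = a * w 0 + (c * (2 * w 2) + d) := by
  simp only [map_add, map_sub, map_mul, map_pow, pderiv_mul, pderiv_pow, pderiv_X,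
    pderiv_C, Pi.single_apply, smul_eq_mul, eval_X, eval_C, map_ofNat, map_one, map_zero]
  norm_num [Fin.ext_iff, show ((2:Fin 3):ℕ) = 2 from rfl]

end Aux

set_option maxHeartbeats 1000000 in
/-- every singular point of the projective cubic surface
`W : X1^2 X3 = X0^3 + (a X2 + b X3) X0 X3 + (c X2^2 + d X2 X3 + e X3^2) X3` lies on the
line `X0 = X3 = 0`, and the singular points there are exactly the points `[0 : ±√c : 1 : 0]`
(i.e. nonzero `v` with `v 0 = v 3 = 0`, `v 2 ≠ 0` and `(v 1)^2 = c (v 2)^2`), assuming the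
affine chart `X3 = 1` of `W` is smooth. -/
theorem stmt_1 (K : Type*) [Field K] [IsAlgClosed K] [CharZero K] (a b c d e : K)
    (F : MvPolynomial (Fin 4) K)
    (hF : F = X 0 ^ 3 + (C a * X 2 + C b * X 3) * X 0 * X 3
      + (C c * X 2 ^ 2 + C d * X 2 * X 3 + C e * X 3 ^ 2) * X 3 - X 1 ^ 2 * X 3)
    (G : MvPolynomial (Fin 3) K)
    (hG : G = X 0 ^ 3 + (C a * X 2 + C b) * X 0 + (C c * X 2 ^ 2 + C d * X 2 + C e) - X 1 ^ 2)
    (hsmooth : ∀ x : Fin 3 → K, eval x G = 0 → ¬ ∀ i, eval x (pderiv i G) = 0) :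
    ∀ v : Fin 4 → K, v ≠ 0 →
      ((eval v F = 0 ∧ ∀ i, eval v (pderiv i F) = 0) ↔
        (v 0 = 0 ∧ v 3 = 0 ∧ v 2 ≠ 0 ∧ v 1 ^ 2 = c * v 2 ^ 2)) := by
  subst hF
  subst hG
  intro v hv
  constructor
  · rintro ⟨hE0, hD⟩
    rw [aux_E] at hE0
    have hD0 := hD 0; rw [aux_d0] at hD0
    have hD1 := hD 1; rw [aux_d1] at hD1
    have hD2 := hD 2; rw [aux_d2] at hD2
    have hD3 := hD 3; rw [aux_d3] at hD3
    have h3 : v 3 = 0 := by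
      by_contra h3
      obtain ⟨u0, hv0⟩ : ∃ u, v 0 = u * v 3 := ⟨v 0 / v 3, (div_mul_cancel₀ _ h3).symm⟩
      obtain ⟨u1, hv1⟩ : ∃ u, v 1 = u * v 3 := ⟨v 1 / v 3, (div_mul_cancel₀ _ h3).symm⟩
      obtain ⟨u2, hv2⟩ : ∃ u, v 2 = u * v 3 := ⟨v 2 / v 3, (div_mul_cancel₀ _ h3).symm⟩
      simp only [hv0, hv1, hv2] at hE0 hD0 hD1 hD2
      refine hsmooth ![u0, u1, u2] ?_ ?_
      · rw [aux_GE]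
        simp only [Matrix.cons_val_zero, Matrix.cons_val_one, Matrix.head_cons,
          Matrix.cons_val_two, Matrix.tail_cons]
        refine mul_left_cancel₀ (pow_ne_zero 3 h3) ?_
        linear_combination hE0
      · intro i
        fin_cases i
        · rw [show (⟨0, by norm_num⟩ : Fin 3) = 0 from rfl, aux_G0]
          simp only [Matrix.cons_val_zero, Matrix.cons_val_one, Matrix.head_cons,
            Matrix.cons_val_two, Matrix.tail_cons]
          refine mul_left_cancel₀ (pow_ne_zero 2 h3) ?_
          linear_combination hD0
        · rw [show (⟨1, by norm_num⟩ : Fin 3) = 1 from rfl, aux_G1]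
          simp only [Matrix.cons_val_zero, Matrix.cons_val_one, Matrix.head_cons,
            Matrix.cons_val_two, Matrix.tail_cons]
          refine mul_left_cancel₀ (pow_ne_zero 2 h3) ?_
          linear_combination hD1
        · rw [show (⟨2, by norm_num⟩ : Fin 3) = 2 from rfl, aux_G2]
          simp only [Matrix.cons_val_zero, Matrix.cons_val_one, Matrix.head_cons,
            Matrix.cons_val_two, Matrix.tail_cons]
          refine mul_left_cancel₀ (pow_ne_zero 2 h3) ?_
          linear_combination hD2
    have h0 : v 0 = 0 := by
      have h30 : (3 : K) * v 0 ^ 2 = 0 := by rw [h3] at hD0; linear_combination hD0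
      have hsq : v 0 ^ 2 = 0 :=
        (mul_eq_zero.mp h30).resolve_left (by norm_num)
      exact pow_eq_zero_iff (by norm_num) |>.mp hsq
    have hc : v 1 ^ 2 = c * v 2 ^ 2 := by
      rw [h0, h3] at hD3
      linear_combination -hD3
    refine ⟨h0, h3, ?_, hc⟩
    intro h2
    have h1 : v 1 = 0 := by
      have hsq : v 1 ^ 2 = 0 := by rw [hc, h2]; ring
      exact pow_eq_zero_iff (by norm_num) |>.mp hsq
    apply hv
    funext i
    fin_cases i <;> simp only [Pi.zero_apply] <;> assumption
  · rintro ⟨h0, h3, h2, hc⟩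
    constructor
    · rw [aux_E, h0, h3]; ring
    · intro i
      fin_cases i
      · rw [show (⟨0, by norm_num⟩ : Fin 4) = 0 from rfl, aux_d0, h0, h3]; ring
      · rw [show (⟨1, by norm_num⟩ : Fin 4) = 1 from rfl, aux_d1, h3]; ring
      · rw [show (⟨2, by norm_num⟩ : Fin 4) = 2 from rfl, aux_d2, h3]; ring
      · rw [show (⟨3, by norm_num⟩ : Fin 4) = 3 from rfl, aux_d3, h0, h3]
        linear_combination -hc
end

section
/- Let W be the cubic surface X1^2 X3 = X0^3 + (a X2 + b X3) X0 X3 + (c X2^2 + d X2 X3 + e X3^2) with c ≠ 0 and a ≠ 0, over an algebraically closed field of characteristic 0. After the explicit linear change of coordinates given by (X0,X1,X2,X3) ↦ ((2√c/a)(X0 - (d/(2√c))X1 - X2), (1/2)(-X2 + X3), (1/(2√c))(X2 + X3), X1), the defining polynomial becomes X0 X1 X3 + G(X0, X1, X2) where G is a cubic form with G(0,0,1) = -8c√c/a^3 ≠ 0. -/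
/-!
Write `P = F ∘ σ` and let `G` be `P` with `X3 := 0`; then `G` is a cubic form in `X0, X1, X2`,
and only `P - G = X0 X1 X3` needs computing. Since `σ0` does not involve `X3`, the terms of `P`
containing `X3` come from `a σ2 σ0 σ3`, which gives `X1 X3 (X0 - (d/2√c) X1 - X2)`, from
`c σ2² σ3 - σ1² σ3 = X1 X2 X3`, and from `d σ2 σ3²`, which cancels the `X1² X3` term.
Finally `σ(0,0,1,0) = (-2√c/a, -1/2, 1/(2√c), 0)`, at which `F` reduces to
`X0³ = -8c√c/a³`.
-/

open MvPolynomial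

namespace MvPolynomial

variable {R σ τ : Type*} [CommSemiring R]

theorem eval_aeval (x : τ → R) (g : σ → MvPolynomial τ R) (p : MvPolynomial σ R) :
    eval x (aeval g p) = eval (fun i => eval x (g i)) p := by
  rw [aeval_eq_bind₁]
  exact aeval_bind₁ x g p

variable [DecidableEq σ]

noncomputable def setVarZero (j : σ) : MvPolynomial σ R →ₐ[R] MvPolynomial σ R :=
  aeval (Function.update X j 0)

theorem setVarZero_mem_supported (j : σ) (p : MvPolynomial σ R) :
    setVarZero j p ∈ supported R ({j}ᶜ : Set σ) := by
  have hrange : Set.range (Function.update (X : σ → MvPolynomial σ R) j 0) ⊆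
      supported R ({j}ᶜ : Set σ) := by
    rintro _ ⟨i, rfl⟩
    by_cases hij : i = j
    · simp [hij]
    · rw [Function.update_of_ne hij]
      exact Algebra.subset_adjoin ⟨i, hij, rfl⟩
  exact Algebra.adjoin_le hrange (by rw [← aeval_range]; exact AlgHom.mem_range_self _ p)

theorem IsHomogeneous.setVarZero {p : MvPolynomial σ R} {n : ℕ} (hp : p.IsHomogeneous n)
    (j : σ) : (MvPolynomial.setVarZero j p).IsHomogeneous n := by
  have hX : ∀ i, (Function.update (X : σ → MvPolynomial σ R) j 0 i).IsHomogeneous 1 := by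
    intro i
    by_cases hij : i = j
    · simpa [hij] using isHomogeneous_zero σ R 1
    · simpa [Function.update_of_ne hij] using isHomogeneous_X R i
  exact one_mul n ▸ hp.aeval _ hX

theorem eval_setVarZero (j : σ) (x : σ → R) (p : MvPolynomial σ R) :
    eval x (setVarZero j p) = eval (Function.update x j 0) p := by
  rw [setVarZero, eval_aeval]
  congr 2
  funext i
  by_cases hij : i = j
  · simp [hij]
  · simp [Function.update_of_ne hij]

end MvPolynomial

section CubicSurface

variable {K : Type*} [Field K]

noncomputable def surfaceCubic (a b c d e : K) : MvPolynomial (Fin 4) K :=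
  X 0 ^ 3 + (C a * X 2 + C b * X 3) * X 0 * X 3
    + (C c * X 2 ^ 2 + C d * X 2 * X 3 + C e * X 3 ^ 2) * X 3 - X 1 ^ 2 * X 3

noncomputable def coordChange (a d s : K) : Fin 4 → MvPolynomial (Fin 4) K :=
  ![C (2 * s / a) * (X 0 - C (d / (2 * s)) * X 1 - X 2),
    C (2⁻¹ : K) * (-X 2 + X 3), C (1 / (2 * s)) * (X 2 + X 3), X 1]

theorem isHomogeneous_surfaceCubic (a b c d e : K) :
    (surfaceCubic a b c d e).IsHomogeneous 3 := by
  have hX := isHomogeneous_X K (σ := Fin 4)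
  have hC := isHomogeneous_C (Fin 4) (R := K)
  have hlin : ∀ k i, (C k * X i : MvPolynomial (Fin 4) K).IsHomogeneous 1 := fun k i =>
    (hC k).mul (hX i)
  refine ((((hX 0).pow 3).add ?_).add ?_).sub ?_
  · exact (((hlin a 2).add (hlin b 3)).mul (hX 0)).mul (hX 3)
  · exact (((((hC c).mul ((hX 2).pow 2)).add (((hC d).mul (hX 2)).mul (hX 3))).add
      ((hC e).mul ((hX 3).pow 2))).mul (hX 3))
  · exact ((hX 1).pow 2).mul (hX 3)

theorem isHomogeneous_coordChange (a d s : K) (i : Fin 4) :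
    (coordChange a d s i).IsHomogeneous 1 := by
  have hX := isHomogeneous_X K (σ := Fin 4)
  have hC := isHomogeneous_C (Fin 4) (R := K)
  fin_cases i
  · exact (hC _).mul (((hX 0).sub ((hC _).mul (hX 1))).sub (hX 2))
  · exact (hC _).mul ((hX 2).neg.add (hX 3))
  · exact (hC _).mul ((hX 2).add (hX 3))
  · exact hX 1

theorem eval_surfaceCubic (a b c d e : K) (y : Fin 4 → K) :
    eval y (surfaceCubic a b c d e) = y 0 ^ 3 + (a * y 2 + b * y 3) * y 0 * y 3
      + (c * y 2 ^ 2 + d * y 2 * y 3 + e * y 3 ^ 2) * y 3 - y 1 ^ 2 * y 3 := by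
  simp [surfaceCubic]

theorem eval_coordChange (a d s : K) (x : Fin 4 → K) :
    (fun i => eval x (coordChange a d s i)) =
      ![2 * s / a * (x 0 - d / (2 * s) * x 1 - x 2), (-x 2 + x 3) / 2, (x 2 + x 3) / (2 * s),
        x 1] := by
  funext i
  fin_cases i <;> simp [coordChange, div_eq_inv_mul]

theorem aeval_coordChange_surfaceCubic [CharZero K] {a c s : K} (b d e : K) (ha : a ≠ 0)
    (hs : s ^ 2 = c) (hs0 : s ≠ 0) :
    aeval (coordChange a d s) (surfaceCubic a b c d e) =
      X 0 * X 1 * X 3 + setVarZero 3 (aeval (coordChange a d s) (surfaceCubic a b c d e)) := by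
  apply MvPolynomial.funext
  intro x
  subst hs
  simp only [eval_add, eval_mul, eval_X, eval_setVarZero, eval_aeval, eval_coordChange,
    eval_surfaceCubic, Matrix.cons_val_zero, Matrix.cons_val_one, Matrix.cons_val, ne_eq,
    Fin.reduceEq, not_false_eq_true, Function.update_of_ne, Function.update_self]
  field_simp
  ring

theorem eval_aeval_coordChange_surfaceCubic {a c s : K} (b d e : K) (hs : s ^ 2 = c) :
    eval (fun i => if i = 2 then 1 else 0) (aeval (coordChange a d s) (surfaceCubic a b c d e)) =
      -8 * c * s / a ^ 3 := by
  subst hs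
  simp only [eval_aeval, eval_coordChange, eval_surfaceCubic, Matrix.cons_val_zero,
    Matrix.cons_val_one, Matrix.cons_val, Fin.reduceEq, ↓reduceIte]
  field_simp
  ring

end CubicSurface

theorem stmt_7_general (K : Type*) [Field K] [CharZero K]
    (a b c d e s : K) (ha : a ≠ 0) (hc : c ≠ 0) (hs : s ^ 2 = c)
    (F : MvPolynomial (Fin 4) K)
    (hF : F = X 0 ^ 3 + (C a * X 2 + C b * X 3) * X 0 * X 3
      + (C c * X 2 ^ 2 + C d * X 2 * X 3 + C e * X 3 ^ 2) * X 3 - X 1 ^ 2 * X 3)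
    (σ : Fin 4 → MvPolynomial (Fin 4) K)
    (hσ : σ = ![C (2 * s / a) * (X 0 - C (d / (2 * s)) * X 1 - X 2),
        C (2⁻¹ : K) * (-X 2 + X 3), C (1 / (2 * s)) * (X 2 + X 3), X 1]) :
    ∃ G : MvPolynomial (Fin 4) K,
      G ∈ MvPolynomial.supported K ({0, 1, 2} : Set (Fin 4)) ∧
      G.IsHomogeneous 3 ∧
      aeval σ F = X 0 * X 1 * X 3 + G ∧
      eval (fun i => if i = 2 then (1 : K) else 0) G = -8 * c * s / a ^ 3 ∧
      (-8 * c * s / a ^ 3 : K) ≠ 0 := by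
  obtain rfl : F = surfaceCubic a b c d e := hF
  obtain rfl : σ = coordChange a d s := hσ
  have hs0 : s ≠ 0 := ne_zero_pow two_ne_zero (hs ▸ hc)
  refine ⟨setVarZero 3 (aeval (coordChange a d s) (surfaceCubic a b c d e)), ?_, ?_,
    aeval_coordChange_surfaceCubic b d e ha hs hs0, ?_, ?_⟩
  · have h012 : ({0, 1, 2} : Set (Fin 4)) = {3}ᶜ := by
      ext i
      fin_cases i <;> simp
    exact h012 ▸ setVarZero_mem_supported _ _
  · exact ((isHomogeneous_surfaceCubic a b c d e).aeval _
      (isHomogeneous_coordChange a d s)).setVarZero 3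
  · have hpt : Function.update (fun i : Fin 4 => if i = 2 then (1 : K) else 0) 3 0 =
        fun i => if i = 2 then 1 else 0 :=
      Function.update_eq_self_iff.mpr (by simp)
    rw [eval_setVarZero, hpt]
    exact eval_aeval_coordChange_surfaceCubic b d e hs
  · exact div_ne_zero (by simp [hc, hs0]) (pow_ne_zero 3 ha)

/-- for the cubic surface `W : X1² X3 = X0³ + (a X2 + b X3) X0 X3 +
(c X2² + d X2 X3 + e X3²) X3` with `a ≠ 0` and `c ≠ 0`, after the linear change of coordinates
`(X0,X1,X2,X3) ↦ ((2√c/a)(X0 − (d/(2√c))X1 − X2), (1/2)(−X2 + X3), (1/(2√c))(X2 + X3), X1)`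
the defining polynomial becomes `X0 X1 X3 + G(X0, X1, X2)` where `G` is a cubic form in
`X0, X1, X2` with `G(0,0,1) = −8c√c/a³ ≠ 0`. -/
theorem stmt_7 (K : Type*) [Field K] [IsAlgClosed K] [CharZero K]
    (a b c d e s : K) (ha : a ≠ 0) (hc : c ≠ 0) (hs : s ^ 2 = c)
    (F : MvPolynomial (Fin 4) K)
    (hF : F = X 0 ^ 3 + (C a * X 2 + C b * X 3) * X 0 * X 3
      + (C c * X 2 ^ 2 + C d * X 2 * X 3 + C e * X 3 ^ 2) * X 3 - X 1 ^ 2 * X 3)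
    (σ : Fin 4 → MvPolynomial (Fin 4) K)
    (hσ : σ = ![C (2 * s / a) * (X 0 - C (d / (2 * s)) * X 1 - X 2),
        C (2⁻¹ : K) * (-X 2 + X 3), C (1 / (2 * s)) * (X 2 + X 3), X 1]) :
    ∃ G : MvPolynomial (Fin 4) K,
      G ∈ MvPolynomial.supported K ({0, 1, 2} : Set (Fin 4)) ∧
      G.IsHomogeneous 3 ∧
      aeval σ F = X 0 * X 1 * X 3 + G ∧
      eval (fun i => if i = 2 then (1 : K) else 0) G = -8 * c * s / a ^ 3 ∧
      (-8 * c * s / a ^ 3 : K) ≠ 0 :=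
  stmt_7_general K a b c d e s ha hc hs F hF σ hσ
end

section
/- Let W be the cubic surface X1^2 X3 = X0^3 + b X0 X3^2 + (c X2^2 + d X2 X3 + e X3^2) X3 with c ≠ 0 (the case a = 0). Under the substitution (X0,X1,X2,X3) ↦ (X2, (1/2)(−X0 + (d/(2√c))X1 + X3), (1/(2√c))(X0 − (d/(2√c))X1 + X3), X1), the defining polynomial becomes X0 X1 X3 + G(X0,X1,X2) with G(X0,X1,X2) = (d/(2√c)) X0 X1^2 + ((4ce − d^2)/(4c)) X1^3 + b X1^2 X2 + X2^3, and in particular G(0,0,1) = 1 ≠ 0. -/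
open MvPolynomial

/-! With `A = X0 - δ X1`, `δ = d/(2√c)`, the substitution makes `c x2² - x1²` the difference of
squares `(A + X3)²/4 - (X3 - A)²/4 = A X3`, which gives the term `X0 X1 X3`; the remaining
`-δ X1² X3` is cancelled by the `X1² X3` part of `d x2 x3²`. -/

theorem cubic_surface_substitution {R : Type*} [CommRing R] (b c d e h w δ y₀ y₁ y₂ y₃ : R)
    (hh : 4 * h ^ 2 = 1) (hw : c * w ^ 2 = h ^ 2) (hδ : d * w = δ) :
    y₂ ^ 3 + b * y₂ * y₁ ^ 2
        + (c * (w * (y₀ - δ * y₁ + y₃)) ^ 2 + d * (w * (y₀ - δ * y₁ + y₃)) * y₁ + e * y₁ ^ 2) * y₁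
        - (h * (-y₀ + δ * y₁ + y₃)) ^ 2 * y₁
      = y₀ * y₁ * y₃
        + (δ * y₀ * y₁ ^ 2 + (e - δ ^ 2) * y₁ ^ 3 + b * y₁ ^ 2 * y₂ + y₂ ^ 3) := by
  linear_combination (y₁ * (y₀ - δ * y₁ + y₃) ^ 2) * hw + (y₁ * (y₀ - δ * y₁) * y₃) * hh
    + ((y₀ - δ * y₁ + y₃) * y₁ ^ 2) * hδ

theorem stmt_8_general (K : Type*) [Field K] [CharZero K]
    (b c d e s : K) (hc : c ≠ 0) (hs : s ^ 2 = c)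
    (F : MvPolynomial (Fin 4) K)
    (hF : F = X 0 ^ 3 + C b * X 0 * X 3 ^ 2
      + (C c * X 2 ^ 2 + C d * X 2 * X 3 + C e * X 3 ^ 2) * X 3 - X 1 ^ 2 * X 3)
    (σ : Fin 4 → MvPolynomial (Fin 4) K)
    (hσ : σ = ![X 2,
        C (2⁻¹ : K) * (-X 0 + C (d / (2 * s)) * X 1 + X 3),
        C (1 / (2 * s)) * (X 0 - C (d / (2 * s)) * X 1 + X 3), X 1])
    (G : MvPolynomial (Fin 4) K)
    (hG : G = C (d / (2 * s)) * X 0 * X 1 ^ 2 + C ((4 * c * e - d ^ 2) / (4 * c)) * X 1 ^ 3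
      + C b * X 1 ^ 2 * X 2 + X 2 ^ 3) :
    aeval σ F = X 0 * X 1 * X 3 + G ∧
      eval (fun i => if i = 2 then (1 : K) else 0) G = 1 ∧ (1 : K) ≠ 0 := by
  subst hF hσ hG
  have hs₀ : s ≠ 0 := by rintro rfl; exact hc (by rw [← hs]; ring)
  have hh : (4 : K) * 2⁻¹ ^ 2 = 1 := by norm_num
  have hw : c * (1 / (2 * s)) ^ 2 = 2⁻¹ ^ 2 := by rw [← hs]; field_simp
  have hcoeff : (4 * c * e - d ^ 2) / (4 * c) = e - (d / (2 * s)) ^ 2 := by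
    rw [← hs] at hc ⊢; field_simp; ring
  refine ⟨?_, by simp, one_ne_zero⟩
  simp only [map_add, map_sub, map_mul, map_pow, aeval_X, aeval_C, algebraMap_eq,
    Matrix.cons_val_zero, Matrix.cons_val_one, Matrix.cons_val_two, Matrix.cons_val_three,
    Matrix.head_cons, Matrix.tail_cons, hcoeff, map_sub (C : K →+* _), map_pow C]
  exact cubic_surface_substitution _ _ _ _ _ _ _ _ _ _ _
    (by rw [← map_pow, ← map_ofNat C 4, ← map_mul, hh, map_one])
    (by rw [← map_pow, ← map_pow, ← map_mul, hw])
    (by rw [← map_mul]; congr 1; field_simp)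

/-- for the cubic surface `W : X1² X3 = X0³ + b X0 X3² +
(c X2² + d X2 X3 + e X3²) X3` with `c ≠ 0` (the case `a = 0`), under the substitution
`(X0,X1,X2,X3) ↦ (X2, (1/2)(−X0 + (d/(2√c))X1 + X3), (1/(2√c))(X0 − (d/(2√c))X1 + X3), X1)`
the defining polynomial becomes `X0 X1 X3 + G(X0,X1,X2)` with
`G = (d/(2√c)) X0 X1² + ((4ce − d²)/(4c)) X1³ + b X1² X2 + X2³`, and `G(0,0,1) = 1 ≠ 0`. -/
theorem stmt_8 (K : Type*) [Field K] [IsAlgClosed K] [CharZero K]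
    (b c d e s : K) (hc : c ≠ 0) (hs : s ^ 2 = c)
    (F : MvPolynomial (Fin 4) K)
    (hF : F = X 0 ^ 3 + C b * X 0 * X 3 ^ 2
      + (C c * X 2 ^ 2 + C d * X 2 * X 3 + C e * X 3 ^ 2) * X 3 - X 1 ^ 2 * X 3)
    (σ : Fin 4 → MvPolynomial (Fin 4) K)
    (hσ : σ = ![X 2,
        C (2⁻¹ : K) * (-X 0 + C (d / (2 * s)) * X 1 + X 3),
        C (1 / (2 * s)) * (X 0 - C (d / (2 * s)) * X 1 + X 3), X 1])
    (G : MvPolynomial (Fin 4) K)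
    (hG : G = C (d / (2 * s)) * X 0 * X 1 ^ 2 + C ((4 * c * e - d ^ 2) / (4 * c)) * X 1 ^ 3
      + C b * X 1 ^ 2 * X 2 + X 2 ^ 3) :
    aeval σ F = X 0 * X 1 * X 3 + G ∧
      eval (fun i => if i = 2 then (1 : K) else 0) G = 1 ∧ (1 : K) ≠ 0 :=
  stmt_8_general K b c d e s hc hs F hF σ hσ G hG
end

section
/- Let W be the cubic surface X1^2 X3 = X0^3 + (a X2 + b X3) X0 X3 + (d X2 + e X3) X3^2 with a ≠ 0 (the case c = 0). Under the substitution (X0,X1,X2,X3) ↦ ((1/a)(X0 − d X1), X2, X3, X1), the defining polynomial becomes X0 X1 X3 + G(X0,X1,X2) where G(0,X1,1) has a zero of order exactly 1 at X1 = 0 and G(X0,0,1) has a zero of order exactly 3 at X0 = 0. -/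
open MvPolynomial

/-- for the cubic surface `W : X1² X3 = X0³ + (a X2 + b X3) X0 X3 +
(d X2 + e X3) X3²` with `a ≠ 0` (the case `c = 0`), under the substitution
`(X0,X1,X2,X3) ↦ ((1/a)(X0 − d X1), X2, X3, X1)` the defining polynomial becomes
`X0 X1 X3 + G(X0,X1,X2)`, where `G(0,X1,1)` has a zero of order exactly 1 at `X1 = 0`
and `G(X0,0,1)` has a zero of order exactly 3 at `X0 = 0`. -/
theorem stmt_9 (K : Type*) [Field K] [IsAlgClosed K] [CharZero K]
    (a b d e : K) (ha : a ≠ 0)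
    (F : MvPolynomial (Fin 4) K)
    (hF : F = X 0 ^ 3 + (C a * X 2 + C b * X 3) * X 0 * X 3
      + (C d * X 2 * X 3 + C e * X 3 ^ 2) * X 3 - X 1 ^ 2 * X 3)
    (σ : Fin 4 → MvPolynomial (Fin 4) K)
    (hσ : σ = ![C (1 / a) * (X 0 - C d * X 1), X 2, X 3, X 1])
    (G : MvPolynomial (Fin 4) K)
    (hG : G = C (1 / a ^ 3) * X 0 ^ 3 - C (3 * d / a ^ 3) * X 0 ^ 2 * X 1
      + C ((a ^ 2 * b + 3 * d ^ 2) / a ^ 3) * X 0 * X 1 ^ 2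
      + C ((a ^ 3 * e - a ^ 2 * b * d - d ^ 3) / a ^ 3) * X 1 ^ 3 - X 1 * X 2 ^ 2) :
    aeval σ F = X 0 * X 1 * X 3 + G ∧
      Polynomial.rootMultiplicity 0
        (aeval (![0, Polynomial.X, 1, 0] : Fin 4 → Polynomial K) G) = 1 ∧
      Polynomial.rootMultiplicity 0
        (aeval (![Polynomial.X, 0, 1, 0] : Fin 4 → Polynomial K) G) = 3 := by
  have ha3 : a ^ 3 ≠ 0 := pow_ne_zero _ ha
  refine ⟨?_, ?_, ?_⟩
  · subst hF hσ hG
    simp only [map_add, map_sub, map_mul, map_pow, aeval_X, aeval_C,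
      Matrix.cons_val_zero, Matrix.cons_val_one, Matrix.head_cons,
      Matrix.cons_val_two, Matrix.tail_cons, Matrix.cons_val_three,
      MvPolynomial.algebraMap_eq]
    apply MvPolynomial.funext
    intro x
    simp only [map_add, map_sub, map_mul, map_pow, eval_X, eval_C]
    field_simp
    ring
  · subst hG
    have key : (aeval (![0, Polynomial.X, 1, 0] : Fin 4 → Polynomial K))
        (C (1 / a ^ 3) * X 0 ^ 3 - C (3 * d / a ^ 3) * X 0 ^ 2 * X 1
        + C ((a ^ 2 * b + 3 * d ^ 2) / a ^ 3) * X 0 * X 1 ^ 2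
        + C ((a ^ 3 * e - a ^ 2 * b * d - d ^ 3) / a ^ 3) * X 1 ^ 3 - X 1 * X 2 ^ 2)
        = (Polynomial.C ((a ^ 3 * e - a ^ 2 * b * d - d ^ 3) / a ^ 3) * Polynomial.X ^ 2
            - 1) * (Polynomial.X - Polynomial.C 0) ^ 1 := by
      simp only [map_add, map_sub, map_mul, map_pow, aeval_X, aeval_C,
        Matrix.cons_val_zero, Matrix.cons_val_one, Matrix.head_cons,
        Matrix.cons_val_two, Matrix.tail_cons, Matrix.cons_val_three,
        Polynomial.algebraMap_eq, map_zero]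
      ring
    have hne : (Polynomial.C ((a ^ 3 * e - a ^ 2 * b * d - d ^ 3) / a ^ 3) * Polynomial.X ^ 2
        - 1 : Polynomial K) ≠ 0 := by
      intro h
      have := congrArg (Polynomial.eval 0) h
      simp at this
    rw [key, Polynomial.rootMultiplicity_mul_X_sub_C_pow hne,
      Polynomial.rootMultiplicity_eq_zero (by simp [Polynomial.IsRoot])]
  · subst hG
    have key : (aeval (![Polynomial.X, 0, 1, 0] : Fin 4 → Polynomial K))
        (C (1 / a ^ 3) * X 0 ^ 3 - C (3 * d / a ^ 3) * X 0 ^ 2 * X 1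
        + C ((a ^ 2 * b + 3 * d ^ 2) / a ^ 3) * X 0 * X 1 ^ 2
        + C ((a ^ 3 * e - a ^ 2 * b * d - d ^ 3) / a ^ 3) * X 1 ^ 3 - X 1 * X 2 ^ 2)
        = Polynomial.C (1 / a ^ 3) * (Polynomial.X - Polynomial.C 0) ^ 3 := by
      simp only [map_add, map_sub, map_mul, map_pow, aeval_X, aeval_C,
        Matrix.cons_val_zero, Matrix.cons_val_one, Matrix.head_cons,
        Matrix.cons_val_two, Matrix.tail_cons, Matrix.cons_val_three,
        Polynomial.algebraMap_eq, map_zero]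
      ring
    have hne : (Polynomial.C (1 / a ^ 3) : Polynomial K) ≠ 0 := by
      simp [Polynomial.C_eq_zero, ha3]
    rw [key, Polynomial.rootMultiplicity_mul_X_sub_C_pow hne, Polynomial.rootMultiplicity_C]
end
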